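/- For a self-adjoint operator setup on finite-dimensional spaces: let P : E → E' be a linear map between finite-dimensional complex inner product spaces, and let P* be its adjoint. Then for all t > 0, Tr(exp(-t P*P)) - Tr(exp(-t P P*)) = dim ker P - dim ker P* ; in particular the supertrace of the heat semigroup is constant in t and equals the index of P. -/

import Mathlib

/-!
Since `tr ((g f)^(n+1)) = tr ((f g)^(n+1))`, the exponential series of `g f` and `f g` have the
same traces term by term except for the constant terms `tr 1 = dim`, so
`tr exp(g f) - tr exp(f g) = dim E - dim E'` for any `g`, in particular for `g = -t P*`.
On the other side, `ker P* = (range P)ᗮ` and rank–nullity give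
`dim ker P - dim ker P* = dim E - dim E'`.
-/

open ContinuousLinearMap

open Module
open scoped Nat

namespace LinearMap

variable {R M N : Type*} [CommRing R] [AddCommGroup M] [Module R M] [AddCommGroup N] [Module R N]

theorem comp_pow_succ (f : M →ₗ[R] N) (g : N →ₗ[R] M) (n : ℕ) :
    (g ∘ₗ f) ^ (n + 1) = g ∘ₗ (((f ∘ₗ g) ^ n) ∘ₗ f) := by
  induction n with
  | zero => rfl
  | succ n ih =>
    rw [pow_succ, ih, pow_succ]
    simp only [Module.End.mul_eq_comp, comp_assoc]

theorem trace_comp_pow_succ_comm [Module.Free R M] [Module.Finite R M] [Module.Free R N]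
    [Module.Finite R N] (f : M →ₗ[R] N) (g : N →ₗ[R] M) (n : ℕ) :
    trace R M ((g ∘ₗ f) ^ (n + 1)) = trace R N ((f ∘ₗ g) ^ (n + 1)) := by
  rw [comp_pow_succ, trace_comp_comm', comp_assoc, ← Module.End.mul_eq_comp, ← pow_succ]

end LinearMap

namespace ContinuousLinearMap

section NormedSpace

variable {𝕜 E F : Type*} [RCLike 𝕜] [NormedAddCommGroup E] [NormedSpace 𝕜 E]
  [FiniteDimensional 𝕜 E] [NormedAddCommGroup F] [NormedSpace 𝕜 F] [FiniteDimensional 𝕜 F]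

theorem hasSum_trace_exp (A : E →L[𝕜] E) :
    HasSum (fun n => (n !⁻¹ : 𝕜) • LinearMap.trace 𝕜 E ((A : E →ₗ[𝕜] E) ^ n))
      (LinearMap.trace 𝕜 E (NormedSpace.exp A : E →L[𝕜] E)) := by
  have := FiniteDimensional.complete 𝕜 (E →L[𝕜] E)
  let tr : (E →L[𝕜] E) →ₗ[𝕜] 𝕜 := LinearMap.trace 𝕜 E ∘ₗ coeLM 𝕜
  simpa [tr, toLinearMap_pow, Function.comp_def] using
    (NormedSpace.exp_series_hasSum_exp' (𝕂 := 𝕜) A).map tr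
      (LinearMap.continuous_of_finiteDimensional tr)

theorem trace_exp_comp_sub_trace_exp_comp (f : E →L[𝕜] F) (g : F →L[𝕜] E) :
    LinearMap.trace 𝕜 E (NormedSpace.exp (g ∘L f) : E →L[𝕜] E) -
        LinearMap.trace 𝕜 F (NormedSpace.exp (f ∘L g) : F →L[𝕜] F) =
      finrank 𝕜 E - finrank 𝕜 F := by
  have hsum := (hasSum_trace_exp (g ∘L f)).sub (hasSum_trace_exp (f ∘L g))
  rw [hsum.unique (hasSum_single 0 fun n hn => ?_)]
  · simp
  · obtain ⟨n, rfl⟩ := Nat.exists_eq_add_one_of_ne_zero hn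
    rw [toLinearMap_comp, toLinearMap_comp, LinearMap.trace_comp_pow_succ_comm, sub_self]

end NormedSpace

theorem finrank_add_finrank_ker_adjoint {𝕜 E F : Type*} [RCLike 𝕜]
    [NormedAddCommGroup E] [InnerProductSpace 𝕜 E] [FiniteDimensional 𝕜 E] [CompleteSpace E]
    [NormedAddCommGroup F] [InnerProductSpace 𝕜 F] [FiniteDimensional 𝕜 F] [CompleteSpace F]
    (P : E →L[𝕜] F) :
    finrank 𝕜 E + finrank 𝕜 (LinearMap.ker (adjoint P : F →ₗ[𝕜] E)) =
      finrank 𝕜 (LinearMap.ker (P : E →ₗ[𝕜] F)) + finrank 𝕜 F := by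
  have hE := LinearMap.finrank_range_add_finrank_ker (P : E →ₗ[𝕜] F)
  have hF := (LinearMap.range (P : E →ₗ[𝕜] F)).finrank_add_finrank_orthogonal
  rw [P.orthogonal_range] at hF
  omega

end ContinuousLinearMap

theorem mckean_singer_finite_dimensional_general
    (E E' : Type*) [NormedAddCommGroup E] [InnerProductSpace ℂ E]
    [NormedAddCommGroup E'] [InnerProductSpace ℂ E']
    [FiniteDimensional ℂ E] [FiniteDimensional ℂ E']
    (P : E →L[ℂ] E') (t : ℝ) :
    LinearMap.trace ℂ E
        ((NormedSpace.exp ((-t : ℂ) • ((ContinuousLinearMap.adjoint P) ∘L P)) :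
          E →L[ℂ] E) : E →ₗ[ℂ] E) -
      LinearMap.trace ℂ E'
        ((NormedSpace.exp ((-t : ℂ) • (P ∘L (ContinuousLinearMap.adjoint P))) :
          E' →L[ℂ] E') : E' →ₗ[ℂ] E') =
      (Module.finrank ℂ (LinearMap.ker (P : E →ₗ[ℂ] E')) : ℂ) -
      (Module.finrank ℂ (LinearMap.ker ((ContinuousLinearMap.adjoint P : E' →L[ℂ] E) :
        E' →ₗ[ℂ] E)) : ℂ) := by
  rw [← smul_comp, ← comp_smul, trace_exp_comp_sub_trace_exp_comp, sub_eq_sub_iff_add_eq_add]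
  exact_mod_cast P.finrank_add_finrank_ker_adjoint

/-- Finite-dimensional McKean–Singer formula: for a linear map `P` between
finite-dimensional complex inner product spaces, with adjoint `P*`, the supertrace
`Tr(exp(-t P*P)) - Tr(exp(-t P P*))` is constant in `t > 0` and equals the index
`dim ker P - dim ker P*`. -/
theorem mckean_singer_finite_dimensional
    (E E' : Type*) [NormedAddCommGroup E] [InnerProductSpace ℂ E]
    [NormedAddCommGroup E'] [InnerProductSpace ℂ E']
    [FiniteDimensional ℂ E] [FiniteDimensional ℂ E']
    (P : E →L[ℂ] E') (t : ℝ) (ht : 0 < t) :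
    LinearMap.trace ℂ E
        ((NormedSpace.exp ((-t : ℂ) • ((ContinuousLinearMap.adjoint P) ∘L P)) :
          E →L[ℂ] E) : E →ₗ[ℂ] E) -
      LinearMap.trace ℂ E'
        ((NormedSpace.exp ((-t : ℂ) • (P ∘L (ContinuousLinearMap.adjoint P))) :
          E' →L[ℂ] E') : E' →ₗ[ℂ] E') =
      (Module.finrank ℂ (LinearMap.ker (P : E →ₗ[ℂ] E')) : ℂ) -
      (Module.finrank ℂ (LinearMap.ker ((ContinuousLinearMap.adjoint P : E' →L[ℂ] E) :
        E' →ₗ[ℂ] E)) : ℂ) :=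
  mckean_singer_finite_dimensional_general E E' P t
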